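/- arXiv:1704.04146 — 5 statements merged into one kernel-verified Lean document; each statement's English description precedes it below -/
import Mathlib

section
/- Let X_2, X_3, X_4 be i.i.d. random variables uniformly distributed on the interval [a,b] with a < b, and define f_X̃(x) = 2 f(x) P(X_3 + X_4 < x + X_2), where f(x) = 1/(b−a) for a ≤ x ≤ b is the uniform density. Then for all x with a ≤ x ≤ b, f_X̃(x) = (−2/(3(a−b)^4)) x^3 + ((a+b)/(a−b)^4) x^2 + ((a^2 − 4ab + b^2)/(a−b)^4) x + (−5a^3 + 12a^2 b − 6ab^2 + b^3)/(3(a−b)^4). In particular, f_X̃ is a probability density on [a,b]. -/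
/-!
Write `μ` for the uniform law on `[a, b]`. By independence,
`P(X₃ + X₄ < x + X₂) = ∫ (μ ∗ μ)(-∞, x + u) dμ(u)` and `(μ ∗ μ)(-∞, s) = ∫ μ(-∞, s - t) dμ(t)`.
The integrands are piecewise polynomial in the integration variable with a single kink in
`[a, b]`, so both integrals are computed by splitting there. The result is
`2 f(x) P(X₃ + X₄ < x + X₂) = ((x + b - 2a)³ - 3(x - a)³) / (3 (b - a)⁴)`; in terms of
`p = x - a ≥ 0` and `q = b - x ≥ 0` the numerator is `5p³ + 12p²q + 6pq² + q³`, and the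
antiderivative `((x + b - 2a)⁴ - 3(x - a)⁴) / 12` shows the total mass is `1`.
-/

open MeasureTheory ProbabilityTheory Set

lemma MeasureTheory.measureReal_prod_apply {α β : Type*} [MeasurableSpace α] [MeasurableSpace β]
    {μ : Measure α} {ν : Measure β} [SFinite μ] [IsFiniteMeasure ν]
    {s : Set (α × β)} (hs : MeasurableSet s) :
    (μ.prod ν).real s = ∫ x, ν.real (Prod.mk x ⁻¹' s) ∂μ := by
  rw [measureReal_def, Measure.prod_apply hs, ← integral_toReal
    (measurable_measure_prodMk_left hs).aemeasurable (ae_of_all _ fun _ => measure_lt_top _ _)]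
  rfl

lemma MeasureTheory.Measure.conv_real_Iio (μ ν : Measure ℝ) [IsFiniteMeasure μ]
    [IsFiniteMeasure ν] (s : ℝ) :
    (μ ∗ ν).real (Iio s) = ∫ t, ν.real (Iio (s - t)) ∂μ := by
  have hadd : Measurable fun p : ℝ × ℝ => p.1 + p.2 := measurable_fst.add measurable_snd
  rw [Measure.conv, map_measureReal_apply hadd measurableSet_Iio,
    measureReal_prod_apply (hadd measurableSet_Iio)]
  congr with t
  congr with u
  simp [lt_sub_iff_add_lt']

lemma ProbabilityTheory.IndepFun.measureReal_lt_comp {Ω α : Type*} [MeasurableSpace Ω]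
    [MeasurableSpace α] {P : Measure Ω} [IsFiniteMeasure P] {X : Ω → α} {Y : Ω → ℝ}
    (hXY : IndepFun X Y P) (hX : Measurable X) (hY : Measurable Y) {g : α → ℝ} (hg : Measurable g) :
    P.real {ω | Y ω < g (X ω)} = ∫ u, (P.map Y).real (Iio (g u)) ∂(P.map X) := by
  have hS : MeasurableSet {p : α × ℝ | p.2 < g p.1} :=
    measurableSet_lt measurable_snd (hg.comp measurable_fst)
  rw [show {ω | Y ω < g (X ω)} = (fun ω => (X ω, Y ω)) ⁻¹' {p | p.2 < g p.1} from rfl,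
    ← map_measureReal_apply (hX.prodMk hY) hS,
    (indepFun_iff_map_prod_eq_prod_map_map hX.aemeasurable hY.aemeasurable).1 hXY,
    measureReal_prod_apply hS]
  rfl

lemma volume_real_Icc_inter_Iio (a b s : ℝ) :
    volume.real (Icc a b ∩ Iio s) = max (min s b - a) 0 := by
  rcases le_or_gt s b with hsb | hbs
  · rw [show Icc a b ∩ Iio s = Ico a s by
      ext t; simp only [mem_inter_iff, mem_Icc, mem_Iio, mem_Ico]
      exact ⟨fun h => ⟨h.1.1, h.2⟩, fun h => ⟨⟨h.1, h.2.le.trans hsb⟩, h.2⟩⟩,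
      Real.volume_real_Ico, min_eq_left hsb]
  · rw [inter_eq_left.2 fun t ht => ht.2.trans_lt hbs, Real.volume_real_Icc, min_eq_right hbs.le]

lemma intervalIntegral.integral_eq_add_of_eqOn {f g h : ℝ → ℝ} {a b c : ℝ} (hac : a ≤ c)
    (hcb : c ≤ b) (hf : Continuous f) (hg : EqOn f g (Icc a c)) (hh : EqOn f h (Icc c b)) :
    ∫ t in a..b, f t = (∫ t in a..c, g t) + ∫ t in c..b, h t := by
  rw [← intervalIntegral.integral_add_adjacent_intervals (hf.intervalIntegrable a c)
    (hf.intervalIntegrable c b), intervalIntegral.integral_congr (g := g) (uIcc_of_le hac ▸ hg),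
    intervalIntegral.integral_congr (f := f) (g := h) (uIcc_of_le hcb ▸ hh)]

lemma integral_add_const_pow (c d k : ℝ) (n : ℕ) :
    ∫ u in c..d, (u + k) ^ n = ((d + k) ^ (n + 1) - (c + k) ^ (n + 1)) / (n + 1) := by
  rw [intervalIntegral.integral_comp_add_right (· ^ n) k, integral_pow]

section UniformOnIcc

variable {a b : ℝ}

lemma integral_Icc_max_min_sub {s : ℝ} (h2a : 2 * a ≤ s) (h2b : s ≤ 2 * b) :
    ∫ t in Icc a b, max (min (s - t) b - a) 0 = (s - 2 * a) ^ 2 / 2 - max (s - a - b) 0 ^ 2 := by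
  have hcont : Continuous fun t : ℝ => max (min (s - t) b - a) 0 := by fun_prop
  rw [integral_Icc_eq_integral_Ioc, ← intervalIntegral.integral_of_le (by linarith)]
  rcases le_total s (a + b) with hs | hs
  · rw [max_eq_right (by linarith : s - a - b ≤ 0), intervalIntegral.integral_eq_add_of_eqOn
      (c := s - a) (g := fun t => s - a - t) (h := fun _ => 0) (by linarith) (by linarith) hcont]
    · simp [intervalIntegral.integral_comp_sub_left (fun x => x), integral_id]
      ring
    · intro t ht
      dsimp only
      rw [min_eq_left (by linarith [ht.1]), max_eq_left (by linarith [ht.2])]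
      ring
    · intro t ht
      dsimp only
      rw [min_eq_left (by linarith [ht.1]), max_eq_right (by linarith [ht.1])]
  · rw [max_eq_left (by linarith : 0 ≤ s - a - b), intervalIntegral.integral_eq_add_of_eqOn
      (c := s - b) (g := fun _ => b - a) (h := fun t => s - a - t) (by linarith) (by linarith)
      hcont]
    · simp [intervalIntegral.integral_comp_sub_left (fun x => x), integral_id]
      ring
    · intro t ht
      dsimp only
      rw [min_eq_right (by linarith [ht.2]), max_eq_left (by linarith)]
    · intro t ht
      dsimp only
      rw [min_eq_left (by linarith [ht.1]), max_eq_left (by linarith [ht.2])]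
      ring

lemma integral_Icc_sq_sub_max_sq {x : ℝ} (hax : a ≤ x) (hxb : x ≤ b) :
    ∫ u in Icc a b, ((x + u - 2 * a) ^ 2 / 2 - max (x + u - a - b) 0 ^ 2)
      = ((x + b - 2 * a) ^ 3 - 3 * (x - a) ^ 3) / 6 := by
  have hcont : Continuous fun u : ℝ => (x + u - 2 * a) ^ 2 / 2 - max (x + u - a - b) 0 ^ 2 := by
    fun_prop
  rw [integral_Icc_eq_integral_Ioc, ← intervalIntegral.integral_of_le (hax.trans hxb),
    intervalIntegral.integral_eq_add_of_eqOn (c := a + b - x)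
      (g := fun u => (u + (x - 2 * a)) ^ 2 / 2)
      (h := fun u => (u + (x - 2 * a)) ^ 2 / 2 - (u + (x - a - b)) ^ 2)
      (by linarith) (by linarith) hcont]
  · have hint (k c : ℝ) : IntervalIntegrable (fun u => (u + k) ^ 2) volume c b :=
      Continuous.intervalIntegrable (by fun_prop) _ _
    rw [intervalIntegral.integral_sub ((hint _ _).div_const 2) (hint _ _),
      intervalIntegral.integral_div, intervalIntegral.integral_div, integral_add_const_pow,
      integral_add_const_pow, integral_add_const_pow]
    ring
  · intro u hu
    dsimp only
    rw [max_eq_right (by linarith [hu.2])]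
    ring
  · intro u hu
    dsimp only
    rw [max_eq_left (by linarith [hu.1])]
    ring


lemma cond_Icc_eq_smul_restrict (hab : a < b) :
    volume[|Icc a b] = ENNReal.ofReal (b - a)⁻¹ • volume.restrict (Icc a b) := by
  rw [ProbabilityTheory.cond, Real.volume_Icc, ENNReal.ofReal_inv_of_pos (sub_pos.2 hab)]

lemma withDensity_indicator_eq_cond_Icc (hab : a < b) :
    volume.withDensity (fun t => ENNReal.ofReal ((Icc a b).indicator (fun _ => 1 / (b - a)) t))
      = volume[|Icc a b] := by
  have hind : (fun t => ENNReal.ofReal ((Icc a b).indicator (fun _ => 1 / (b - a)) t))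
      = (Icc a b).indicator fun _ => ENNReal.ofReal (b - a)⁻¹ := by
    ext t
    by_cases ht : t ∈ Icc a b <;> simp [ht]
  rw [hind, withDensity_indicator measurableSet_Icc, withDensity_const,
    cond_Icc_eq_smul_restrict hab]

lemma cond_Icc_real_Iio (hab : a < b) (s : ℝ) :
    (volume[|Icc a b]).real (Iio s) = max (min s b - a) 0 / (b - a) := by
  rw [measureReal_def, cond_apply measurableSet_Icc, ENNReal.toReal_mul, ENNReal.toReal_inv,
    ← measureReal_def, ← measureReal_def, volume_real_Icc_inter_Iio,
    Real.volume_real_Icc_of_le hab.le, div_eq_inv_mul]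

lemma integral_cond_Icc (hab : a < b) (g : ℝ → ℝ) :
    ∫ t, g t ∂volume[|Icc a b] = (b - a)⁻¹ * ∫ t in Icc a b, g t := by
  rw [cond_Icc_eq_smul_restrict hab, integral_smul_measure,
    ENNReal.toReal_ofReal (inv_nonneg.2 (sub_pos.2 hab).le), smul_eq_mul]


lemma cond_Icc_conv_real_Iio (hab : a < b) {s : ℝ} (h2a : 2 * a ≤ s) (h2b : s ≤ 2 * b) :
    (volume[|Icc a b] ∗ volume[|Icc a b]).real (Iio s)
      = ((s - 2 * a) ^ 2 / 2 - max (s - a - b) 0 ^ 2) / (b - a) ^ 2 := by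
  simp_rw [Measure.conv_real_Iio, integral_cond_Icc hab, cond_Icc_real_Iio hab, integral_div,
    integral_Icc_max_min_sub h2a h2b]
  field_simp

lemma integral_cond_Icc_conv_real_Iio_add (hab : a < b) {x : ℝ} (hax : a ≤ x) (hxb : x ≤ b) :
    ∫ u, (volume[|Icc a b] ∗ volume[|Icc a b]).real (Iio (x + u)) ∂volume[|Icc a b]
      = ((x + b - 2 * a) ^ 3 - 3 * (x - a) ^ 3) / (6 * (b - a) ^ 3) := by
  rw [integral_cond_Icc hab, setIntegral_congr_fun measurableSet_Icc fun u hu =>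
    cond_Icc_conv_real_Iio hab (by linarith [hu.1]) (by linarith [hu.2]), integral_div,
    integral_Icc_sq_sub_max_sq hax hxb]
  field_simp

end UniformOnIcc

noncomputable def addendDensity (a b x : ℝ) : ℝ :=
  ((x + b - 2 * a) ^ 3 - 3 * (x - a) ^ 3) / (3 * (b - a) ^ 4)

section AddendDensity

variable {a b : ℝ}

lemma addendDensity_eq (hab : a ≠ b) (x : ℝ) :
    addendDensity a b x = (-2 / (3 * (a - b) ^ 4)) * x ^ 3 + ((a + b) / (a - b) ^ 4) * x ^ 2
      + ((a ^ 2 - 4 * a * b + b ^ 2) / (a - b) ^ 4) * x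
      + (-5 * a ^ 3 + 12 * a ^ 2 * b - 6 * a * b ^ 2 + b ^ 3) / (3 * (a - b) ^ 4) := by
  have : b - a ≠ 0 := sub_ne_zero.2 hab.symm
  have : a - b ≠ 0 := sub_ne_zero.2 hab
  rw [addendDensity]
  field_simp
  ring

lemma addendDensity_nonneg {x : ℝ} (hax : a ≤ x) (hxb : x ≤ b) : 0 ≤ addendDensity a b x := by
  have hp : 0 ≤ x - a := sub_nonneg.2 hax
  have hq : 0 ≤ b - x := sub_nonneg.2 hxb
  rw [addendDensity, show (x + b - 2 * a) ^ 3 - 3 * (x - a) ^ 3 = 5 * (x - a) ^ 3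
    + 12 * (x - a) ^ 2 * (b - x) + 6 * (x - a) * (b - x) ^ 2 + (b - x) ^ 3 by ring]
  positivity

lemma integral_addendDensity (hab : a < b) : ∫ x in Icc a b, addendDensity a b x = 1 := by
  have : b - a ≠ 0 := (sub_pos.2 hab).ne'
  rw [integral_Icc_eq_integral_Ioc, ← intervalIntegral.integral_of_le hab.le]
  have hshift (x : ℝ) : addendDensity a b x
      = ((x + (b - 2 * a)) ^ 3 - 3 * (x + -a) ^ 3) / (3 * (b - a) ^ 4) := by
    rw [addendDensity]; ring
  have hint (k : ℝ) : IntervalIntegrable (fun x => (x + k) ^ 3) volume a b :=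
    Continuous.intervalIntegrable (by fun_prop) _ _
  simp_rw [hshift]
  rw [intervalIntegral.integral_div, intervalIntegral.integral_sub (hint _) ((hint _).const_mul 3),
    intervalIntegral.integral_const_mul, integral_add_const_pow, integral_add_const_pow]
  field_simp
  ring

end AddendDensity

/-- The addend density of the maximum of two sums of two i.i.d. `U(a,b)`
variables: `2 f(x) P(X₃ + X₄ < x + X₂)` equals the stated cubic polynomial
on `[a,b]`, and this polynomial is a probability density on `[a,b]`. -/
theorem uniform_addend_distribution
    {Ω : Type*} [MeasurableSpace Ω] (P : Measure Ω) [IsProbabilityMeasure P]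
    (a b : ℝ) (hab : a < b)
    (X₂ X₃ X₄ : Ω → ℝ)
    (hX₂ : Measurable X₂) (hX₃ : Measurable X₃) (hX₄ : Measurable X₄)
    (f : ℝ → ℝ)
    (hf : f = Set.indicator (Set.Icc a b) (fun _ => 1 / (b - a)))
    (hlaw₂ : P.map X₂ = MeasureTheory.volume.withDensity
      (fun t => ENNReal.ofReal (f t)))
    (hlaw₃ : P.map X₃ = MeasureTheory.volume.withDensity
      (fun t => ENNReal.ofReal (f t)))
    (hlaw₄ : P.map X₄ = MeasureTheory.volume.withDensity
      (fun t => ENNReal.ofReal (f t)))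
    (hindep : iIndepFun ![X₂, X₃, X₄] P) :
    (∀ x, a ≤ x → x ≤ b →
      2 * f x * (P {ω | X₃ ω + X₄ ω < x + X₂ ω}).toReal
        = (-2 / (3 * (a - b) ^ 4)) * x ^ 3
          + ((a + b) / (a - b) ^ 4) * x ^ 2
          + ((a ^ 2 - 4 * a * b + b ^ 2) / (a - b) ^ 4) * x
          + (-5 * a ^ 3 + 12 * a ^ 2 * b - 6 * a * b ^ 2 + b ^ 3)
            / (3 * (a - b) ^ 4))
    ∧ (∀ x ∈ Set.Icc a b, 0 ≤
        (-2 / (3 * (a - b) ^ 4)) * x ^ 3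
          + ((a + b) / (a - b) ^ 4) * x ^ 2
          + ((a ^ 2 - 4 * a * b + b ^ 2) / (a - b) ^ 4) * x
          + (-5 * a ^ 3 + 12 * a ^ 2 * b - 6 * a * b ^ 2 + b ^ 3)
            / (3 * (a - b) ^ 4))
    ∧ ∫ x in Set.Icc a b,
        ((-2 / (3 * (a - b) ^ 4)) * x ^ 3
          + ((a + b) / (a - b) ^ 4) * x ^ 2
          + ((a ^ 2 - 4 * a * b + b ^ 2) / (a - b) ^ 4) * x
          + (-5 * a ^ 3 + 12 * a ^ 2 * b - 6 * a * b ^ 2 + b ^ 3)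
            / (3 * (a - b) ^ 4)) = 1 := by
  have hlaw : volume.withDensity (fun t => ENNReal.ofReal (f t)) = volume[|Icc a b] :=
    hf ▸ withDensity_indicator_eq_cond_Icc hab
  rw [hlaw] at hlaw₂ hlaw₃ hlaw₄
  have hmeas : ∀ i, Measurable (![X₂, X₃, X₄] i) := by
    intro i; fin_cases i <;> assumption
  have hindep₂ : IndepFun X₂ (X₃ + X₄) P := by
    simpa using hindep.indepFun_add_right hmeas 0 1 2 (by decide) (by decide)
  have hindep₃₄ : IndepFun X₃ X₄ P := by
    simpa using hindep.indepFun (i := 1) (j := 2) (by decide)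
  have hconv : P.map (X₃ + X₄) = volume[|Icc a b] ∗ volume[|Icc a b] := by
    rw [hindep₃₄.map_add_eq_map_conv_map hX₃ hX₄, hlaw₃, hlaw₄]
  refine ⟨fun x hax hxb => ?_, fun x hx => ?_, ?_⟩
  · have hprob : P.real {ω | X₃ ω + X₄ ω < x + X₂ ω}
        = ((x + b - 2 * a) ^ 3 - 3 * (x - a) ^ 3) / (6 * (b - a) ^ 3) := by
      rw [← integral_cond_Icc_conv_real_Iio_add hab hax hxb, ← hconv, ← hlaw₂]
      exact hindep₂.measureReal_lt_comp hX₂ (hX₃.add hX₄) (measurable_const_add x)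
    have : b - a ≠ 0 := (sub_pos.2 hab).ne'
    rw [← addendDensity_eq hab.ne, hf, indicator_of_mem (mem_Icc.2 ⟨hax, hxb⟩),
      ← measureReal_def, hprob, addendDensity]
    field_simp
    ring
  · exact addendDensity_eq hab.ne x ▸ addendDensity_nonneg hx.1 hx.2
  · simp_rw [← addendDensity_eq hab.ne]
    exact integral_addendDensity hab
end

section
/- Let X_2, X_3, X_4 be i.i.d. random variables uniformly distributed on [0,1]. Then for all x with 0 < x ≤ 1, 2 · P(X_3 · X_4 < x · X_2) = −x log x + (3/2) x, where log is the natural logarithm. In particular, the function x ↦ −x log x + (3/2)x is a probability density on (0,1]. -/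
/-!
Conditioning on `X₂ = y`, the event is `X₃ X₄ < x y`. The product of two uniforms has
distribution function `t - t log t` on `(0, 1]`, as one sees by conditioning once more:
`P(u X₄ < t) = min 1 (t / u)`. Integrating over `y`, the substitution `s = x y` turns the
probability into `x⁻¹ ∫₀ˣ (s - s log s) ds = 3x/4 - (x log x)/2`, and `∫₀¹ s log s = -1/4`
gives the total mass.
-/

open MeasureTheory ProbabilityTheory Set Real

local notation "𝕌" => volume.restrict (Ioc (0 : ℝ) 1)

theorem integral_mul_log_from_zero (b : ℝ) :
    ∫ s in 0..b, s * log s = b ^ 2 / 2 * log b - b ^ 2 / 4 := by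
  have hcont : Continuous fun s : ℝ ↦ s ^ 2 / 2 * log s - s ^ 2 / 4 := by
    have : (fun s : ℝ ↦ s ^ 2 / 2 * log s - s ^ 2 / 4)
        = fun s ↦ s / 2 * (s * log s) - s ^ 2 / 4 := by
      ext s; ring
    rw [this]; fun_prop
  rw [intervalIntegral.integral_eq_sub_of_hasDeriv_right hcont.continuousOn
    (fun s hs ↦ ?_) (continuous_mul_log.intervalIntegrable 0 b)]
  · simp
  have hs0 : s ≠ 0 := by
    rintro rfl
    rcases le_total 0 b with h | h <;> simp [h] at hs
  have h : HasDerivAt (fun s : ℝ ↦ s ^ 2 / 2 * log s - s ^ 2 / 4) _ s :=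
    ((hasDerivAt_pow 2 s).div_const 2 |>.mul (hasDerivAt_log hs0)).sub
      ((hasDerivAt_pow 2 s).div_const 4)
  refine (h.congr_deriv ?_).hasDerivWithinAt
  field_simp
  ring

theorem uniform_Iio (c : ℝ) : 𝕌 (Iio c) = ENNReal.ofReal (min 1 c) := by
  rw [Measure.restrict_apply measurableSet_Iio,
    measure_congr ((Iio_ae_eq_Iic (μ := volume)).inter (ae_eq_refl (Ioc (0 : ℝ) 1))),
    inter_comm, Ioc_inter_Iic, Real.volume_Ioc, sub_zero]

theorem uniform_prod_uniform_mul_lt {t : ℝ} (ht0 : 0 < t) (ht1 : t ≤ 1) :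
    ((𝕌).prod 𝕌) {p : ℝ × ℝ | p.1 * p.2 < t} = ENNReal.ofReal (t - t * log t) := by
  rw [Measure.prod_apply (measurableSet_lt (by fun_prop) measurable_const)]
  have hfiber : ∀ u ∈ Ioc (0 : ℝ) 1,
      𝕌 (Prod.mk u ⁻¹' {p : ℝ × ℝ | p.1 * p.2 < t}) = ENNReal.ofReal (min 1 (t / u)) := by
    intro u hu
    have : Prod.mk u ⁻¹' {p : ℝ × ℝ | p.1 * p.2 < t} = Iio (t / u) := by
      ext v; simp [lt_div_iff₀' hu.1]
    rw [this, uniform_Iio]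
  have hsmall : ∀ u ∈ Ioc 0 t, ENNReal.ofReal (min 1 (t / u)) = 1 := fun u hu ↦ by
    rw [min_eq_left ((one_le_div hu.1).2 hu.2), ENNReal.ofReal_one]
  have hlarge : ∀ u ∈ Ioc t 1, ENNReal.ofReal (min 1 (t / u)) = ENNReal.ofReal (t * u⁻¹) :=
    fun u hu ↦ by rw [min_eq_right ((div_le_one (ht0.trans hu.1)).2 hu.1.le), div_eq_mul_inv]
  have hlog : ∫ u in Ioc t 1, t * u⁻¹ = -(t * log t) := by
    rw [integral_const_mul, ← intervalIntegral.integral_of_le ht1,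
      integral_inv_of_pos ht0 one_pos, one_div, log_inv, mul_neg]
  have hinv : IntegrableOn (fun u : ℝ ↦ t * u⁻¹) (Ioc t 1) :=
    ((continuousOn_const.mul (continuousOn_inv₀.mono fun u hu ↦ (ht0.trans_le hu.1).ne'))
      |>.integrableOn_Icc).mono_set Ioc_subset_Icc_self
  rw [setLIntegral_congr_fun measurableSet_Ioc hfiber, ← Ioc_union_Ioc_eq_Ioc ht0.le ht1,
    lintegral_union measurableSet_Ioc (Ioc_disjoint_Ioc_of_le le_rfl),
    setLIntegral_congr_fun measurableSet_Ioc hsmall,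
    setLIntegral_congr_fun measurableSet_Ioc hlarge,
    ← ofReal_integral_eq_lintegral_ofReal hinv
      (ae_restrict_of_forall_mem measurableSet_Ioc fun u hu ↦ by
        have := ht0.trans hu.1; positivity),
    hlog, setLIntegral_one, Real.volume_Ioc, sub_zero, ← ENNReal.ofReal_add ht0.le
      (neg_nonneg.2 (mul_log_nonpos ht0.le ht1)), ← sub_eq_add_neg]

theorem uniform_prod_uniform_prod_uniform_mul_lt_mul {x : ℝ} (hx0 : 0 < x) (hx1 : x ≤ 1) :
    (((𝕌).prod 𝕌).prod 𝕌) {q : (ℝ × ℝ) × ℝ | q.1.1 * q.1.2 < x * q.2}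
      = ENNReal.ofReal (3 / 4 * x - x / 2 * log x) := by
  rw [Measure.prod_apply_symm (measurableSet_lt (by fun_prop) (by fun_prop))]
  have hxy : ∀ y ∈ Ioc (0 : ℝ) 1, x * y ∈ Ioc 0 1 := fun y hy ↦
    ⟨mul_pos hx0 hy.1, mul_le_one₀ hx1 hy.1.le hy.2⟩
  have hfiber : ∀ y ∈ Ioc (0 : ℝ) 1,
      ((𝕌).prod 𝕌) ((fun p ↦ (p, y)) ⁻¹' {q : (ℝ × ℝ) × ℝ | q.1.1 * q.1.2 < x * q.2})
        = ENNReal.ofReal (x * y - x * y * log (x * y)) := fun y hy ↦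
    uniform_prod_uniform_mul_lt (hxy y hy).1 (hxy y hy).2
  have hint : ∫ y in (0 : ℝ)..1, (x * y - x * y * log (x * y))
      = 3 / 4 * x - x / 2 * log x := by
    rw [intervalIntegral.integral_comp_mul_left (fun s ↦ s - s * log s) hx0.ne',
      intervalIntegral.integral_sub intervalIntegral.intervalIntegrable_id
        (continuous_mul_log.intervalIntegrable _ _), integral_id, mul_zero, mul_one,
      integral_mul_log_from_zero, smul_eq_mul]
    field_simp
    ring
  rw [setLIntegral_congr_fun measurableSet_Ioc hfiber,
    ← ofReal_integral_eq_lintegral_ofReal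
      ((by fun_prop : Continuous fun y : ℝ ↦ x * y - x * y * log (x * y)) |>.integrableOn_Ioc)
      (ae_restrict_of_forall_mem measurableSet_Ioc fun y hy ↦
        sub_nonneg.2 ((mul_log_nonpos (hxy y hy).1.le (hxy y hy).2).trans (hxy y hy).1.le)),
    ← intervalIntegral.integral_of_le zero_le_one, hint]

theorem map_prodMk_prodMk_eq_prod_of_iIndepFun {Ω β : Type*} [MeasurableSpace Ω]
    [MeasurableSpace β] {P : Measure Ω} [IsFiniteMeasure P] {X Y Z : Ω → β}
    (hX : Measurable X) (hY : Measurable Y) (hZ : Measurable Z) (h : iIndepFun ![X, Y, Z] P) :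
    P.map (fun ω ↦ ((Y ω, Z ω), X ω)) = ((P.map Y).prod (P.map Z)).prod (P.map X) := by
  have hm : ∀ i, Measurable (![X, Y, Z] i) := fun i ↦ by fin_cases i <;> assumption
  have hYZ : IndepFun Y Z P := h.indepFun (show (1 : Fin 3) ≠ 2 by decide)
  have hYZX : IndepFun (fun ω ↦ (Y ω, Z ω)) X P :=
    h.indepFun_prodMk hm 1 2 0 (by decide) (by decide)
  rw [(indepFun_iff_map_prod_eq_prod_map_map (by fun_prop) (by fun_prop)).1 hYZX,
    (indepFun_iff_map_prod_eq_prod_map_map (by fun_prop) (by fun_prop)).1 hYZ]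

/-- The factor density of the maximum of two products of two i.i.d. `U(0,1)`
variables: for `0 < x ≤ 1`, `2 P(X₃ X₄ < x X₂) = -x log x + (3/2) x`, and this
function is a probability density on `(0,1]`. -/
theorem uniform_factor_distribution
    {Ω : Type*} [MeasurableSpace Ω] (P : Measure Ω) [IsProbabilityMeasure P]
    (X₂ X₃ X₄ : Ω → ℝ)
    (hX₂ : Measurable X₂) (hX₃ : Measurable X₃) (hX₄ : Measurable X₄)
    (hlaw₂ : P.map X₂ = MeasureTheory.volume.restrict (Set.Ioc (0:ℝ) 1))
    (hlaw₃ : P.map X₃ = MeasureTheory.volume.restrict (Set.Ioc (0:ℝ) 1))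
    (hlaw₄ : P.map X₄ = MeasureTheory.volume.restrict (Set.Ioc (0:ℝ) 1))
    (hindep : iIndepFun ![X₂, X₃, X₄] P) :
    (∀ x : ℝ, 0 < x → x ≤ 1 →
      2 * (P {ω | X₃ ω * X₄ ω < x * X₂ ω}).toReal
        = -x * Real.log x + (3 / 2) * x)
    ∧ (∀ x ∈ Set.Ioc (0:ℝ) 1, 0 ≤ -x * Real.log x + (3 / 2) * x)
    ∧ ∫ x in Set.Ioc (0:ℝ) 1, (-x * Real.log x + (3 / 2) * x) = 1 := by
  have hdensity_nonneg : ∀ x ∈ Ioc (0 : ℝ) 1, 0 ≤ -x * log x + 3 / 2 * x := fun x hx ↦ by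
    nlinarith [mul_log_nonpos hx.1.le hx.2, hx.1]
  refine ⟨fun x hx0 hx1 ↦ ?_, hdensity_nonneg, ?_⟩
  · have hS : MeasurableSet {q : (ℝ × ℝ) × ℝ | q.1.1 * q.1.2 < x * q.2} :=
      measurableSet_lt (by fun_prop) (by fun_prop)
    have hprob : P {ω | X₃ ω * X₄ ω < x * X₂ ω}
        = P.map (fun ω ↦ ((X₃ ω, X₄ ω), X₂ ω)) {q | q.1.1 * q.1.2 < x * q.2} :=
      (Measure.map_apply ((hX₃.prodMk hX₄).prodMk hX₂) hS).symm
    rw [hprob, map_prodMk_prodMk_eq_prod_of_iIndepFun hX₂ hX₃ hX₄ hindep, hlaw₂, hlaw₃, hlaw₄,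
      uniform_prod_uniform_prod_uniform_mul_lt_mul hx0 hx1, ENNReal.toReal_ofReal
        (by linarith [hdensity_nonneg x ⟨hx0, hx1⟩])]
    ring
  · simp_rw [← intervalIntegral.integral_of_le zero_le_one, neg_mul]
    rw [intervalIntegral.integral_add (f := fun x ↦ -(x * log x)) (g := fun x ↦ 3 / 2 * x)
        (continuous_mul_log.neg.intervalIntegrable 0 1)
        ((by fun_prop : Continuous fun x : ℝ ↦ 3 / 2 * x).intervalIntegrable 0 1),
      intervalIntegral.integral_neg, integral_mul_log_from_zero,
      intervalIntegral.integral_const_mul, integral_id]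
    norm_num
end

section
/- Let σ > 0 and let X_2, X_3, X_4 be i.i.d. normal random variables with mean 0 and variance σ^2. Then for every real x, P(X_3 · X_4 < x · X_2) = 1/2. Consequently, the factor density of the maximum of two products of two i.i.d. N(0,σ^2) variables, f_X̃(x) = 2 φ(x) P(X_3 X_4 < x X_2), equals the parent density itself: f_X̃(x) = φ(x) = (2πσ^2)^{−1/2} exp(−x^2/(2σ^2)). -/
open MeasureTheory ProbabilityTheory Real Set

/-! Put `Z = X₃ X₄ - x X₂`. Flipping the signs of `X₂` and `X₃` preserves the joint law of the
i.i.d. triple and turns `Z` into `-Z`, so the law of `Z` is symmetric. It has no atom at `0`: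
off the null event `X₃ = 0`, `Z = 0` forces `X₄ = x X₂ / X₃`, and `X₄` has an atomless law and is
independent of `(X₂, X₃)`. Hence `P(Z < 0) = 1/2`. Only the symmetry and atomlessness of the
normal law enter, not the Bessel-function density of `X₃ X₄`. -/

lemma measure_Iio_zero_eq_half_of_map_neg {μ : Measure ℝ} [IsProbabilityMeasure μ]
    (hsymm : μ.map Neg.neg = μ) (h0 : μ {0} = 0) : μ (Iio 0) = 2⁻¹ := by
  have hIoi : μ (Ioi 0) = μ (Iio 0) := by
    conv_lhs => rw [← hsymm]
    rw [Measure.map_apply measurable_neg measurableSet_Ioi, neg_preimage, neg_Ioi, neg_zero]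
  have hsum : μ (Iio 0) + μ (Ioi 0) = 1 := by
    rw [← measure_union Ioi_disjoint_Iio_same.symm measurableSet_Ioi, Iio_union_Ioi,
      measure_compl (measurableSet_singleton 0) (measure_ne_top μ _), h0, measure_univ, tsub_zero]
  rw [hIoi, ← two_mul] at hsum
  exact ENNReal.eq_inv_of_mul_eq_one_left (by rwa [mul_comm])

section

variable {Ω : Type*} [MeasurableSpace Ω] {P : Measure Ω}

lemma measure_eq_comp_eq_zero_of_indepFun [IsProbabilityMeasure P] {α β : Type*}
    [MeasurableSpace α] [MeasurableEq α] [MeasurableSpace β] {ν : Measure α} [NullSingletonClass ν]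
    {W : Ω → β} {X : Ω → α} (hW : AEMeasurable W P) (hX : HasLaw X ν P) (hind : W ⟂ᵢ[P] X)
    {g : β → α} (hg : Measurable g) :
    P {ω | X ω = g (W ω)} = 0 := by
  have := hX.isProbabilityMeasure_iff.mp ‹_›
  have hgraph : MeasurableSet {q : β × α | q.2 = g q.1} :=
    measurableSet_eq_fun measurable_snd (hg.comp measurable_fst)
  rw [((indepFun_iff_hasLaw_prodMk_prod ⟨hW, rfl⟩ hX).mp hind).measure_eq hgraph,
    Measure.prod_apply hgraph]
  simp

section IIDTriple

variable [IsProbabilityMeasure P] {ν : Measure ℝ} {X : Fin 3 → Ω → ℝ}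
  (hX : ∀ i, HasLaw (X i) ν P) (hindep : iIndepFun X P)
include hX hindep

lemma measure_mul_eq_mul_eq_zero [NullSingletonClass ν] (x : ℝ) :
    P {ω | X 1 ω * X 2 ω = x * X 0 ω} = 0 := by
  have hX₁ : P {ω | X 1 ω = 0} = 0 := by
    rw [(hX 1).measure_eq (p := (· = 0)) (measurableSet_singleton 0)]
    exact measure_singleton 0
  have hX₂ : P {ω | X 2 ω = x * X 0 ω / X 1 ω} = 0 :=
    measure_eq_comp_eq_zero_of_indepFun (W := fun ω => (X 0 ω, X 1 ω))
      (g := fun p => x * p.1 / p.2)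
      ((hX 0).aemeasurable.prodMk (hX 1).aemeasurable) (hX 2)
      (hindep.indepFun_prodMk₀ (fun i => (hX i).aemeasurable) 0 1 2 (by decide) (by decide))
      (by fun_prop)
  refine measure_mono_null (fun ω hω => ?_) (measure_union_null hX₁ hX₂)
  by_cases h : X 1 ω = 0
  · exact Or.inl h
  · exact Or.inr (eq_div_of_mul_eq h (by rw [mul_comm]; exact hω))

lemma map_neg_map_mul_sub_mul (hsymm : ν.map Neg.neg = ν) (x : ℝ) :
    (P.map fun ω => X 1 ω * X 2 ω - x * X 0 ω).map Neg.neg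
      = P.map fun ω => X 1 ω * X 2 ω - x * X 0 ω := by
  have := (hX 0).isProbabilityMeasure_iff.mp ‹_›
  set f : (Fin 3 → ℝ) → ℝ := fun y => y 1 * y 2 - x * y 0
  have hf : Measurable f := by fun_prop
  have hlaw : P.map (fun ω => X 1 ω * X 2 ω - x * X 0 ω) = (Measure.pi fun _ => ν).map f :=
    (HasLaw.comp ⟨hf.aemeasurable, rfl⟩ (hindep.hasLaw_pi hX)).map_eq
  have hflip : MeasurePreserving (fun (y : Fin 3 → ℝ) i => ![Neg.neg, Neg.neg, id] i (y i))
      (Measure.pi fun _ => ν) (Measure.pi fun _ => ν) := by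
    refine measurePreserving_pi _ _ fun i => ?_
    fin_cases i
    exacts [⟨measurable_neg, hsymm⟩, ⟨measurable_neg, hsymm⟩, MeasurePreserving.id ν]
  have hodd : Neg.neg ∘ f = f ∘ fun y i => ![Neg.neg, Neg.neg, id] i (y i) := by
    ext y
    simp only [f, Function.comp_apply, Matrix.cons_val_zero, Matrix.cons_val_one, Matrix.cons_val,
      id_eq]
    ring
  rw [hlaw, Measure.map_map measurable_neg hf, hodd, ← Measure.map_map hf hflip.measurable,
    hflip.map_eq]

lemma measure_mul_lt_mul_eq_half [NullSingletonClass ν] (hsymm : ν.map Neg.neg = ν) (x : ℝ) :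
    P {ω | X 1 ω * X 2 ω < x * X 0 ω} = 2⁻¹ := by
  have hZ : AEMeasurable (fun ω => X 1 ω * X 2 ω - x * X 0 ω) P := by
    have := fun i => (hX i).aemeasurable
    fun_prop
  have h0 : (P.map fun ω => X 1 ω * X 2 ω - x * X 0 ω) {0} = 0 := by
    rw [Measure.map_apply_of_aemeasurable hZ (measurableSet_singleton 0)]
    convert measure_mul_eq_mul_eq_zero hX hindep x using 2
    ext ω
    simp only [mem_preimage, mem_singleton_iff, sub_eq_zero, mem_ofPred_eq]
  have := Measure.isProbabilityMeasure_map (μ := P) hZ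
  rw [← measure_Iio_zero_eq_half_of_map_neg (map_neg_map_mul_sub_mul hX hindep hsymm x) h0,
    Measure.map_apply_of_aemeasurable hZ measurableSet_Iio]
  congr 1
  ext ω
  simp only [mem_ofPred_eq, mem_preimage, mem_Iio, sub_neg]

end IIDTriple

end

lemma gaussianPDFReal_zero_eq_rpow (v : NNReal) (x : ℝ) :
    gaussianPDFReal 0 v x = (2 * π * v) ^ (-(1:ℝ)/2) * Real.exp (-x ^ 2 / (2 * v)) := by
  simp only [gaussianPDFReal_def, sub_zero]
  rw [Real.sqrt_eq_rpow, ← Real.rpow_neg (by positivity), neg_div 2 (1 : ℝ)]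

/-- The factor density of the maximum of two products of two i.i.d. `N(0,σ²)`
variables: `P(X₃ X₄ < x X₂) = 1/2` for all `x`, so the factor density
`2 φ(x) P(X₃ X₄ < x X₂)` equals the parent density `φ` itself. -/
theorem normal_factor_distribution
    {Ω : Type*} [MeasurableSpace Ω] (P : Measure Ω) [IsProbabilityMeasure P]
    (σ : ℝ) (hσ : 0 < σ)
    (X₂ X₃ X₄ : Ω → ℝ)
    (hX₂ : Measurable X₂) (hX₃ : Measurable X₃) (hX₄ : Measurable X₄)
    (φ : ℝ → ℝ)
    (hφ : φ = fun x =>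
      (2 * π * σ ^ 2) ^ (-(1:ℝ)/2) * Real.exp (-x ^ 2 / (2 * σ ^ 2)))
    (hlaw₂ : P.map X₂ = MeasureTheory.volume.withDensity
      (fun t => ENNReal.ofReal (φ t)))
    (hlaw₃ : P.map X₃ = MeasureTheory.volume.withDensity
      (fun t => ENNReal.ofReal (φ t)))
    (hlaw₄ : P.map X₄ = MeasureTheory.volume.withDensity
      (fun t => ENNReal.ofReal (φ t)))
    (hindep : iIndepFun ![X₂, X₃, X₄] P) :
    ∀ x : ℝ,
      (P {ω | X₃ ω * X₄ ω < x * X₂ ω}).toReal = 1 / 2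
      ∧ 2 * φ x * (P {ω | X₃ ω * X₄ ω < x * X₂ ω}).toReal = φ x := by
  intro x
  set v : NNReal := ⟨σ ^ 2, sq_nonneg σ⟩
  have hv : v ≠ 0 := fun h => (pow_pos hσ 2).ne' (congrArg NNReal.toReal h)
  have hν : volume.withDensity (fun t => ENNReal.ofReal (φ t)) = gaussianReal 0 v := by
    simp_rw [gaussianReal_of_var_ne_zero 0 hv, gaussianPDF_def, gaussianPDFReal_zero_eq_rpow, hφ]
    rfl
  have := nullSingletonClass_gaussianReal (μ := 0) hv
  have hX : ∀ i, HasLaw (![X₂, X₃, X₄] i) (gaussianReal 0 v) P := by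
    intro i
    fin_cases i
    exacts [⟨hX₂.aemeasurable, hlaw₂.trans hν⟩, ⟨hX₃.aemeasurable, hlaw₃.trans hν⟩,
      ⟨hX₄.aemeasurable, hlaw₄.trans hν⟩]
  have hsymm : (gaussianReal 0 v).map Neg.neg = gaussianReal 0 v := by
    have := gaussianReal_map_neg (μ := 0) (v := v)
    rwa [neg_zero] at this
  have hhalf : (P {ω | X₃ ω * X₄ ω < x * X₂ ω}).toReal = 1 / 2 := by
    simpa using congrArg ENNReal.toReal (measure_mul_lt_mul_eq_half hX hindep hsymm x)
  exact ⟨hhalf, by rw [hhalf]; ring⟩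
end

section
/- Let λ > 0 and let X_2, X_3, X_4 be i.i.d. exponential random variables with rate λ (density f(t) = λ e^{−λt} for t ≥ 0). Then for all x > 0, 2 f(x) P(X_3 · X_4 < x · X_2) = 2 λ^2 x E_1(λx), where E_1(x) = ∫_x^∞ e^{−t}/t dt is the exponential integral. In particular, x ↦ 2λ^2 x E_1(λx) is a probability density on (0, ∞). -/
open MeasureTheory ProbabilityTheory

/-- The exponential integral `E₁(x) = ∫_x^∞ e^{-t}/t dt`. -/
noncomputable def expIntE1 (x : ℝ) : ℝ :=
  ∫ t in Set.Ioi x, Real.exp (-t) / t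

/-!
Conditioning on `X₃ = s`, the two-variable identity `P(s X₄ < x X₂) = x / (s + x)` (integrate the
exponential tail `P(X₂ > s t / x) = e^{-λ s t / x}` against the law of `X₄`, a Laplace transform)
gives `P(X₃ X₄ < x X₂) = E[x / (X₃ + x)] = λ x e^{λx} E₁(λx)`, the last step being the substitution
`t = λ (s + x)`. For the normalisation, Tonelli on `0 < y < t` turns `∫₀^∞ y E₁(y) dy` into
`∫₀^∞ (t² / 2) e^{-t} / t dt = Γ(2) / 2`.
-/

open Set Real
open scoped ENNReal

theorem integral_Ioi_comp_add_right {E : Type*} [NormedAddCommGroup E] [NormedSpace ℝ E]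
    (g : ℝ → E) (a c : ℝ) : ∫ s in Ioi a, g (s + c) = ∫ t in Ioi (a + c), g t := by
  have hpre : (· + c) ⁻¹' Ioi (a + c) = Ioi a := by
    ext s
    simp
  rw [← (measurePreserving_add_right volume c).setIntegral_preimage_emb
    (MeasurableEquiv.addRight c).measurableEmbedding g (Ioi (a + c)), hpre]

theorem lintegral_Ioi_mul_lintegral_Ioi {g h : ℝ → ℝ≥0∞} (hg : Measurable g) (hh : Measurable h)
    (a : ℝ) :
    ∫⁻ y in Ioi a, h y * ∫⁻ t in Ioi y, g t = ∫⁻ t in Ioi a, g t * ∫⁻ y in Ioo a t, h y := by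
  set K : ℝ → ℝ → ℝ≥0∞ := fun y t =>
    {p : ℝ × ℝ | p.1 < p.2}.indicator (fun p => h p.1 * g p.2) (y, t)
  have hK : Measurable (Function.uncurry K) :=
    ((hh.comp measurable_fst).mul (hg.comp measurable_snd)).indicator
      (measurableSet_lt measurable_fst measurable_snd)
  have hleft : ∀ y ∈ Ioi a, h y * ∫⁻ t in Ioi y, g t = ∫⁻ t in Ioi a, K y t := fun y hy => by
    change _ = ∫⁻ t in Ioi a, (Ioi y).indicator (fun t => h y * g t) t
    rw [lintegral_indicator measurableSet_Ioi, Measure.restrict_restrict measurableSet_Ioi,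
      inter_eq_left.2 (Ioi_subset_Ioi (le_of_lt hy)), lintegral_const_mul _ hg]
  have hright : ∀ t ∈ Ioi a, ∫⁻ y in Ioi a, K y t = g t * ∫⁻ y in Ioo a t, h y := fun t _ => by
    change ∫⁻ y in Ioi a, (Iio t).indicator (fun y => h y * g t) y = _
    rw [lintegral_indicator measurableSet_Iio, Measure.restrict_restrict measurableSet_Iio,
      Iio_inter_Ioi, lintegral_mul_const _ hh, mul_comm]
  rw [setLIntegral_congr_fun measurableSet_Ioi hleft, lintegral_lintegral_swap hK.aemeasurable,
    setLIntegral_congr_fun measurableSet_Ioi hright]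

theorem integrableOn_exp_neg_div_self {y : ℝ} (hy : 0 < y) :
    IntegrableOn (fun t => exp (-t) / t) (Ioi y) := by
  refine ((integrableOn_exp_neg_Ioi y).div_const y).mono'
    (by fun_prop : Measurable fun t => exp (-t) / t).aestronglyMeasurable ?_
  refine (ae_restrict_iff' measurableSet_Ioi).2 (.of_forall fun t (ht : y < t) => ?_)
  rw [norm_of_nonneg (div_nonneg (exp_nonneg _) (hy.trans ht).le)]
  gcongr

theorem expIntE1_nonneg {y : ℝ} (hy : 0 ≤ y) : 0 ≤ expIntE1 y :=
  setIntegral_nonneg measurableSet_Ioi fun t (ht : y < t) =>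
    div_nonneg (exp_nonneg _) (hy.trans ht.le)

theorem ofReal_expIntE1 {y : ℝ} (hy : 0 < y) :
    ENNReal.ofReal (expIntE1 y) = ∫⁻ t in Ioi y, ENNReal.ofReal (exp (-t) / t) :=
  ofReal_integral_eq_lintegral_ofReal (integrableOn_exp_neg_div_self hy)
    ((ae_restrict_iff' measurableSet_Ioi).2 (.of_forall fun t (ht : y < t) =>
      div_nonneg (exp_nonneg _) (hy.trans ht).le))

theorem measurable_expIntE1 : Measurable expIntE1 := by
  have hF : StronglyMeasurable
      ({p : ℝ × ℝ | p.1 < p.2}.indicator fun p => exp (-p.2) / p.2) :=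
    ((by fun_prop : Measurable fun p : ℝ × ℝ => exp (-p.2) / p.2).indicator
      (measurableSet_lt measurable_fst measurable_snd)).stronglyMeasurable
  have hE : expIntE1 = fun y => ∫ t, {p : ℝ × ℝ | p.1 < p.2}.indicator
      (fun p => exp (-p.2) / p.2) (y, t) := by
    ext y
    rw [expIntE1, ← integral_indicator measurableSet_Ioi]
    rfl
  rw [hE]
  exact (hF.integral_prod_right' (ν := volume)).measurable

theorem integrableOn_exp_neg_mul_div_add {r x : ℝ} (hr : 0 < r) (hx : 0 < x) :
    IntegrableOn (fun s => exp (-(r * s)) / (s + x)) (Ioi 0) := by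
  refine ((exp_neg_integrableOn_Ioi 0 hr).div_const x).mono'
    (by fun_prop : Measurable fun s => exp (-(r * s)) / (s + x)).aestronglyMeasurable ?_
  refine (ae_restrict_iff' measurableSet_Ioi).2 (.of_forall fun s (hs : 0 < s) => ?_)
  rw [norm_of_nonneg (by positivity), neg_mul]
  gcongr
  linarith

theorem integral_exp_neg_mul_div_add {r x : ℝ} (hr : 0 < r) (hx : 0 < x) :
    ∫ s in Ioi 0, exp (-(r * s)) / (s + x) = exp (r * x) * expIntE1 (r * x) := by
  have hshift := integral_Ioi_comp_add_right (fun t => exp (-t) / t) 0 (r * x)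
  have hscale := integral_comp_mul_left_Ioi' (fun u => exp (-(u + r * x)) / (u + r * x)) 0 hr
  simp only [zero_add, mul_zero, smul_eq_mul] at hshift hscale
  rw [expIntE1, ← hshift, ← hscale, ← mul_assoc, ← integral_const_mul]
  refine setIntegral_congr_fun measurableSet_Ioi fun s (hs : 0 < s) => ?_
  rw [show -(r * s + r * x) = -(r * s) + -(r * x) by ring, exp_add, exp_neg (r * x)]
  field_simp

theorem integral_mul_expIntE1 : ∫ y in Ioi 0, y * expIntE1 y = 1 / 2 := by
  have hinner : ∀ t ∈ Ioi (0 : ℝ),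
      ENNReal.ofReal (exp (-t) / t) * ∫⁻ y in Ioo 0 t, ENNReal.ofReal y
        = ENNReal.ofReal (exp (-t) * t ^ (2 - 1 : ℝ) / 2) := fun t (ht : 0 < t) => by
    have hint : IntegrableOn (fun y : ℝ => y) (Ioo 0 t) :=
      continuous_id.integrableOn_Icc.mono_set Ioo_subset_Icc_self
    rw [← ofReal_integral_eq_lintegral_ofReal hint
        ((ae_restrict_iff' measurableSet_Ioo).2 (.of_forall fun y hy => hy.1.le)),
      ← ENNReal.ofReal_mul (by positivity), ← integral_Ioc_eq_integral_Ioo,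
      ← intervalIntegral.integral_of_le ht.le, integral_id]
    norm_num
    field_simp
  have hlintegral : ∫⁻ y in Ioi 0, ENNReal.ofReal (y * expIntE1 y) = ENNReal.ofReal (1 / 2) := by
    calc ∫⁻ y in Ioi 0, ENNReal.ofReal (y * expIntE1 y)
        = ∫⁻ y in Ioi 0, ENNReal.ofReal y * ∫⁻ t in Ioi y, ENNReal.ofReal (exp (-t) / t) :=
          setLIntegral_congr_fun measurableSet_Ioi fun y (hy : 0 < y) => by
            rw [ENNReal.ofReal_mul hy.le, ofReal_expIntE1 hy]
      _ = ∫⁻ t in Ioi 0, ENNReal.ofReal (exp (-t) / t) * ∫⁻ y in Ioo 0 t, ENNReal.ofReal y :=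
          lintegral_Ioi_mul_lintegral_Ioi (by fun_prop) (by fun_prop) 0
      _ = ∫⁻ t in Ioi 0, ENNReal.ofReal (exp (-t) * t ^ (2 - 1 : ℝ) / 2) :=
          setLIntegral_congr_fun measurableSet_Ioi hinner
      _ = ENNReal.ofReal (1 / 2) := by
          rw [← ofReal_integral_eq_lintegral_ofReal ((GammaIntegral_convergent two_pos).div_const 2)
            ((ae_restrict_iff' measurableSet_Ioi).2 (.of_forall fun t (ht : 0 < t) => by
              positivity)),
            integral_div, ← Gamma_eq_integral two_pos, Gamma_two]
  rw [integral_eq_lintegral_of_nonneg_ae, hlintegral, ENNReal.toReal_ofReal (by norm_num)]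
  · exact (ae_restrict_iff' measurableSet_Ioi).2 (.of_forall fun y (hy : 0 < y) =>
      mul_nonneg hy.le (expIntE1_nonneg hy.le))
  · exact (measurable_id.mul measurable_expIntE1).aestronglyMeasurable

theorem integral_two_mul_sq_mul_expIntE1_mul {r : ℝ} (hr : 0 < r) :
    ∫ x in Ioi 0, 2 * r ^ 2 * x * expIntE1 (r * x) = 1 := by
  calc ∫ x in Ioi 0, 2 * r ^ 2 * x * expIntE1 (r * x)
      = ∫ x in Ioi 0, 2 * r * ((r * x) * expIntE1 (r * x)) := by
        congr 1
        ext x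
        ring
    _ = r⁻¹ * (2 * r * (1 / 2)) := by
        rw [integral_comp_mul_left_Ioi (fun y => 2 * r * (y * expIntE1 y)) 0 hr, mul_zero,
          integral_const_mul, integral_mul_expIntE1, smul_eq_mul]
    _ = 1 := by field_simp

namespace ProbabilityTheory

theorem exponentialPDF_eq_indicator (r : ℝ) :
    exponentialPDF r = (Ici 0).indicator fun t => ENNReal.ofReal (r * exp (-(r * t))) := by
  ext t
  by_cases ht : 0 ≤ t <;> simp [exponentialPDF_eq, ht]

theorem exponentialPDF_eq_ofReal_indicator (r : ℝ) :
    exponentialPDF r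
      = fun t => ENNReal.ofReal ((Ici 0).indicator (fun t => r * exp (-(r * t))) t) := by
  ext t
  by_cases ht : 0 ≤ t <;> simp [exponentialPDF_eq, ht]

theorem expMeasure_eq_withDensity_restrict (r : ℝ) :
    expMeasure r
      = (volume.restrict (Ioi 0)).withDensity fun t => ENNReal.ofReal (r * exp (-(r * t))) := by
  rw [Measure.restrict_congr_set Ioi_ae_eq_Ici, ← withDensity_indicator measurableSet_Ici,
    ← exponentialPDF_eq_indicator]
  rfl

theorem ae_pos_expMeasure (r : ℝ) : ∀ᵐ t ∂expMeasure r, 0 < t := by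
  rw [expMeasure_eq_withDensity_restrict]
  exact withDensity_absolutelyContinuous _ _ (ae_restrict_mem measurableSet_Ioi)

theorem lintegral_expMeasure (r : ℝ) {g : ℝ → ℝ≥0∞} (hg : Measurable g) :
    ∫⁻ t, g t ∂expMeasure r = ∫⁻ t in Ioi 0, ENNReal.ofReal (r * exp (-(r * t))) * g t := by
  rw [expMeasure_eq_withDensity_restrict,
    lintegral_withDensity_eq_lintegral_mul _ (by fun_prop) hg]
  rfl

theorem expMeasure_Ioi {r a : ℝ} (hr : 0 < r) (ha : 0 ≤ a) :
    expMeasure r (Ioi a) = ENNReal.ofReal (exp (-(r * a))) := by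
  have := isProbabilityMeasure_expMeasure hr
  have hcdf : 0 ≤ 1 - exp (-(r * a)) :=
    sub_nonneg.2 (exp_le_one_iff.2 (neg_nonpos.2 (mul_nonneg hr.le ha)))
  rw [← compl_Iic, prob_compl_eq_one_sub measurableSet_Iic, ← ofReal_cdf, cdf_expMeasure_eq hr,
    if_pos ha, ← ENNReal.ofReal_one, ← ENNReal.ofReal_sub _ hcdf, sub_sub_cancel]

theorem lintegral_exp_neg_mul_expMeasure {r c : ℝ} (hr : 0 < r) (hc : 0 < r + c) :
    ∫⁻ t, ENNReal.ofReal (exp (-(c * t))) ∂expMeasure r = ENNReal.ofReal (r / (r + c)) := by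
  have hdensity : ∀ t, ENNReal.ofReal (r * exp (-(r * t))) * ENNReal.ofReal (exp (-(c * t)))
      = ENNReal.ofReal (r / (r + c)) * ENNReal.ofReal ((r + c) * exp (-((r + c) * t))) := by
    intro t
    rw [← ENNReal.ofReal_mul (by positivity), ← ENNReal.ofReal_mul (by positivity)]
    congr 1
    rw [show -((r + c) * t) = -(r * t) + -(c * t) by ring, exp_add]
    field_simp
  have := isProbabilityMeasure_expMeasure hc
  have hmass : ∫⁻ t in Ioi 0, ENNReal.ofReal ((r + c) * exp (-((r + c) * t))) = 1 := by
    simpa using (lintegral_expMeasure (r + c) (g := fun _ => 1) measurable_const).symm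
  rw [lintegral_expMeasure r (by fun_prop)]
  simp_rw [hdensity]
  rw [lintegral_const_mul _ (by fun_prop), hmass, mul_one]

theorem expMeasure_prod_mul_lt_mul {r a b : ℝ} (hr : 0 < r) (ha : 0 ≤ a) (hb : 0 < b) :
    (expMeasure r).prod (expMeasure r) {p | a * p.1 < b * p.2} = ENNReal.ofReal (b / (a + b)) := by
  have := isProbabilityMeasure_expMeasure hr
  have hslice : ∀ t, 0 < t → expMeasure r (Prod.mk t ⁻¹' {p : ℝ × ℝ | a * p.1 < b * p.2})
      = ENNReal.ofReal (exp (-(r * a / b * t))) := by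
    intro t ht
    have : Prod.mk t ⁻¹' {p : ℝ × ℝ | a * p.1 < b * p.2} = Ioi (a * t / b) := by
      ext u
      simp [div_lt_iff₀ hb, mul_comm u]
    rw [this, expMeasure_Ioi hr (by positivity)]
    ring_nf
  rw [Measure.prod_apply (measurableSet_lt (by fun_prop) (by fun_prop)),
    lintegral_congr_ae ((ae_pos_expMeasure r).mono hslice),
    lintegral_exp_neg_mul_expMeasure hr (by positivity)]
  congr 1
  field_simp
  ring

theorem lintegral_div_add_expMeasure {r x : ℝ} (hr : 0 < r) (hx : 0 < x) :
    ∫⁻ s, ENNReal.ofReal (x / (s + x)) ∂expMeasure r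
      = ENNReal.ofReal (r * x * exp (r * x) * expIntE1 (r * x)) := by
  have hprod : ∀ s ∈ Ioi (0 : ℝ),
      ENNReal.ofReal (r * exp (-(r * s))) * ENNReal.ofReal (x / (s + x))
        = ENNReal.ofReal (r * x * (exp (-(r * s)) / (s + x))) := fun s (hs : 0 < s) => by
    rw [← ENNReal.ofReal_mul (by positivity)]
    ring_nf
  rw [lintegral_expMeasure r (by fun_prop), setLIntegral_congr_fun measurableSet_Ioi hprod,
    ← ofReal_integral_eq_lintegral_ofReal ((integrableOn_exp_neg_mul_div_add hr hx).const_mul _)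
      ((ae_restrict_iff' measurableSet_Ioi).2 (.of_forall fun s (hs : 0 < s) => by positivity)),
    integral_const_mul, integral_exp_neg_mul_div_add hr hx]
  ring_nf

theorem expMeasure_prod_prod_mul_lt_mul {r x : ℝ} (hr : 0 < r) (hx : 0 < x) :
    (expMeasure r).prod ((expMeasure r).prod (expMeasure r)) {p | p.1 * p.2.1 < x * p.2.2}
      = ENNReal.ofReal (r * x * exp (r * x) * expIntE1 (r * x)) := by
  have := isProbabilityMeasure_expMeasure hr
  have hslice : ∀ s, 0 < s → (expMeasure r).prod (expMeasure r)
      (Prod.mk s ⁻¹' {p : ℝ × (ℝ × ℝ) | p.1 * p.2.1 < x * p.2.2}) = ENNReal.ofReal (x / (s + x)) :=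
    fun s hs => expMeasure_prod_mul_lt_mul hr hs.le hx
  rw [Measure.prod_apply (measurableSet_lt (by fun_prop) (by fun_prop)),
    lintegral_congr_ae ((ae_pos_expMeasure r).mono hslice), lintegral_div_add_expMeasure hr hx]

theorem iIndepFun.map_prodMk_prodMk {Ω ι β : Type*} [MeasurableSpace Ω] [MeasurableSpace β]
    {P : Measure Ω} [IsProbabilityMeasure P] {f : ι → Ω → β} (hindep : iIndepFun f P)
    (hf : ∀ i, AEMeasurable (f i) P) {i j k : ι} (hij : i ≠ j) (hik : i ≠ k) (hjk : j ≠ k) :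
    P.map (fun ω => (f i ω, (f j ω, f k ω)))
      = (P.map (f i)).prod ((P.map (f j)).prod (P.map (f k))) := by
  have hi_jk : IndepFun (f i) (fun ω => (f j ω, f k ω)) P :=
    (hindep.indepFun_prodMk₀ hf j k i hij.symm hik.symm).symm
  rw [(indepFun_iff_map_prod_eq_prod_map_map (hf i) ((hf j).prodMk (hf k))).1 hi_jk,
    (indepFun_iff_map_prod_eq_prod_map_map (hf j) (hf k)).1 (hindep.indepFun hjk)]

end ProbabilityTheory

theorem exponential_factor_distribution_general
    {Ω : Type*} [MeasurableSpace Ω] (P : Measure Ω) [IsProbabilityMeasure P]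
    (lam : ℝ) (hlam : 0 < lam)
    (X₂ X₃ X₄ : Ω → ℝ)
    (f : ℝ → ℝ)
    (hf : f = Set.indicator (Set.Ici 0) (fun t => lam * Real.exp (-(lam * t))))
    (hlaw₂ : P.map X₂ = MeasureTheory.volume.withDensity
      (fun t => ENNReal.ofReal (f t)))
    (hlaw₃ : P.map X₃ = MeasureTheory.volume.withDensity
      (fun t => ENNReal.ofReal (f t)))
    (hlaw₄ : P.map X₄ = MeasureTheory.volume.withDensity
      (fun t => ENNReal.ofReal (f t)))
    (hindep : iIndepFun ![X₂, X₃, X₄] P) :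
    (∀ x : ℝ, 0 < x →
      2 * f x * (P {ω | X₃ ω * X₄ ω < x * X₂ ω}).toReal
        = 2 * lam ^ 2 * x * expIntE1 (lam * x))
    ∧ (∀ x ∈ Set.Ioi (0:ℝ), 0 ≤ 2 * lam ^ 2 * x * expIntE1 (lam * x))
    ∧ ∫ x in Set.Ioi (0:ℝ), 2 * lam ^ 2 * x * expIntE1 (lam * x) = 1 := by
  have := isProbabilityMeasure_expMeasure hlam
  rw [hf, ← exponentialPDF_eq_ofReal_indicator] at hlaw₂ hlaw₃ hlaw₄
  have hlaw : ∀ i, P.map (![X₂, X₃, X₄] i) = expMeasure lam := by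
    intro i
    fin_cases i <;> assumption
  have hmeas : ∀ i, AEMeasurable (![X₂, X₃, X₄] i) P := fun i =>
    aemeasurable_of_map_neZero (by rw [hlaw i]; infer_instance)
  have hmap : P.map (fun ω => (X₃ ω, (X₄ ω, X₂ ω)))
      = (expMeasure lam).prod ((expMeasure lam).prod (expMeasure lam)) := by
    have h := hindep.map_prodMk_prodMk hmeas (i := 1) (j := 2) (k := 0) (by decide) (by decide)
      (by decide)
    simp only [hlaw] at h
    exact h
  have htriple : AEMeasurable (fun ω => (X₃ ω, (X₄ ω, X₂ ω))) P :=
    (hmeas 1).prodMk ((hmeas 2).prodMk (hmeas 0))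
  have hprob : ∀ x, 0 < x → P {ω | X₃ ω * X₄ ω < x * X₂ ω}
      = ENNReal.ofReal (lam * x * exp (lam * x) * expIntE1 (lam * x)) := fun x hx => by
    rw [← expMeasure_prod_prod_mul_lt_mul hlam hx, ← hmap,
      Measure.map_apply_of_aemeasurable htriple (measurableSet_lt (by fun_prop) (by fun_prop))]
    rfl
  refine ⟨fun x hx => ?_, fun x (hx : 0 < x) => ?_, integral_two_mul_sq_mul_expIntE1_mul hlam⟩
  · rw [hprob x hx, ENNReal.toReal_ofReal
        (mul_nonneg (by positivity) (expIntE1_nonneg (mul_pos hlam hx).le)),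
      hf, indicator_of_mem (mem_Ici.2 hx.le), exp_neg]
    field_simp
  · exact mul_nonneg (by positivity) (expIntE1_nonneg (mul_pos hlam hx).le)

/-- The factor density of the maximum of two products of two i.i.d. `Exp(λ)`
variables: for `x > 0`, `2 f(x) P(X₃ X₄ < x X₂) = 2 λ² x E₁(λx)`, and this
function is a probability density on `(0,∞)`. -/
theorem exponential_factor_distribution
    {Ω : Type*} [MeasurableSpace Ω] (P : Measure Ω) [IsProbabilityMeasure P]
    (lam : ℝ) (hlam : 0 < lam)
    (X₂ X₃ X₄ : Ω → ℝ)
    (hX₂ : Measurable X₂) (hX₃ : Measurable X₃) (hX₄ : Measurable X₄)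
    (f : ℝ → ℝ)
    (hf : f = Set.indicator (Set.Ici 0) (fun t => lam * Real.exp (-(lam * t))))
    (hlaw₂ : P.map X₂ = MeasureTheory.volume.withDensity
      (fun t => ENNReal.ofReal (f t)))
    (hlaw₃ : P.map X₃ = MeasureTheory.volume.withDensity
      (fun t => ENNReal.ofReal (f t)))
    (hlaw₄ : P.map X₄ = MeasureTheory.volume.withDensity
      (fun t => ENNReal.ofReal (f t)))
    (hindep : iIndepFun ![X₂, X₃, X₄] P) :
    (∀ x : ℝ, 0 < x →
      2 * f x * (P {ω | X₃ ω * X₄ ω < x * X₂ ω}).toReal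
        = 2 * lam ^ 2 * x * expIntE1 (lam * x))
    ∧ (∀ x ∈ Set.Ioi (0:ℝ), 0 ≤ 2 * lam ^ 2 * x * expIntE1 (lam * x))
    ∧ ∫ x in Set.Ioi (0:ℝ), 2 * lam ^ 2 * x * expIntE1 (lam * x) = 1 :=
  exponential_factor_distribution_general P lam hlam X₂ X₃ X₄ f hf hlaw₂ hlaw₃ hlaw₄ hindep
end

section
/- For every integer n ≥ 1, ∫_0^∞ x · [ n e^{−x}(x − H_{n−1}) + Σ_{j=2}^{n} (−1)^j C(n,j) (j/(j−1)) e^{−jx} ] dx = 1 + 1/n + H_{n−1}, where H_j = Σ_{i=1}^j 1/i (H_0 = 0). Moreover, for n ≥ 2 this expected value E_max(n) = 1 + 1/n + H_{n−1} satisfies 1 + 1/n + γ + log(n−1) < E_max(n) < 1 + 1/n + γ + log n, where γ is the Euler–Mascheroni constant and log is the natural logarithm; in particular E_max(n) grows logarithmically in n. -/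
/-! Expanding the integrand and using `∫₀^∞ x^k e^{-ax} dx = k!/a^{k+1}`, the expectation
becomes `2n - n H_{n-1} + ∑_{j=2}^n (-1)^j C(n,j)/(j(j-1))`. After the partial fraction
`1/(j(j-1)) = 1/(j-1) - 1/j`, both alternating binomial sums are evaluated by induction on `n`:
Pascal's rule gives `∑ (-1)^j C(n+1,j) f(j) = ∑ (-1)^j C(n,j) (f(j) - f(j+1))`, and shifting
`1/(j-1)` and `1/j` by one gives `1/j` and `1/(j+1)`, whose sums are `-H_n` and, by the absorption
`C(n,j)/(j+1) = C(n+1,j+1)/(n+1)`, `1/(n+1)`. The bounds hold because `H_n - log(n+1)`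
increases and `H_n - log n` decreases to `γ`. -/

open MeasureTheory Finset Real

/-- The `j`-th harmonic number `H_j = ∑_{i=1}^j 1/i` (with `H_0 = 0`). -/
noncomputable def harm (j : ℕ) : ℝ :=
  ∑ i ∈ Finset.range j, (1 : ℝ) / (i + 1)

theorem sum_range_succ_alternating_choose_mul {R : Type*} [CommRing R] (f : ℕ → R) (n : ℕ) :
    ∑ j ∈ range (n + 2), (-1) ^ j * ((n + 1).choose j : R) * f j
      = ∑ j ∈ range (n + 1), (-1) ^ j * (n.choose j : R) * (f j - f (j + 1)) :=
  calc _ = ∑ j ∈ range (n + 2), ((n + 1).choose j : R) * ((-1) ^ j * f j) :=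
        sum_congr rfl fun _ _ ↦ by ring
    _ = _ := sum_choose_succ_mul (fun j _ ↦ (-1) ^ j * f j) n
    _ = _ := by rw [← sum_add_distrib]; exact sum_congr rfl fun _ _ ↦ by ring

section AlternatingBinomialSums

variable {K : Type*} [Field K] [CharZero K]

theorem sum_range_alternating_choose_mul_inv_add_one (n : ℕ) :
    ∑ j ∈ range (n + 1), (-1) ^ j * (n.choose j : K) * ((j : K) + 1)⁻¹
      = ((n : K) + 1)⁻¹ := by
  have absorb (j : ℕ) : (n.choose j : K) * ((j : K) + 1)⁻¹
      = ((n + 1).choose (j + 1) : K) * ((n : K) + 1)⁻¹ := by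
    rw [eq_mul_inv_iff_mul_eq₀ (Nat.cast_add_one_ne_zero n), mul_right_comm,
      mul_inv_eq_iff_eq_mul₀ (Nat.cast_add_one_ne_zero j)]
    have : ((n : K) + 1) * n.choose j = ((n + 1).choose (j + 1) : K) * ((j : K) + 1) := by
      exact_mod_cast Nat.add_one_mul_choose_eq n j
    linear_combination this
  have shifted_row_sum : ∑ j ∈ range (n + 1), (-1) ^ j * ((n + 1).choose (j + 1) : K) = 1 := by
    have row_sum := sum_range_succ_alternating_choose_mul (fun _ ↦ (1 : K)) n
    simp only [sub_self, mul_zero, sum_const_zero, mul_one] at row_sum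
    rw [sum_range_succ'] at row_sum
    simp only [pow_succ, mul_neg, mul_one, neg_mul, sum_neg_distrib, pow_zero,
      Nat.choose_zero_right, Nat.cast_one] at row_sum
    linear_combination -row_sum
  calc _ = ∑ j ∈ range (n + 1), (-1) ^ j * ((n + 1).choose (j + 1) : K) * ((n : K) + 1)⁻¹ :=
        sum_congr rfl fun j _ ↦ by rw [mul_assoc, absorb, mul_assoc]
    _ = _ := by rw [← sum_mul, shifted_row_sum, one_mul]

/-- The `j = 0` term vanishes because `(0 : K)⁻¹ = 0`. -/
theorem sum_range_alternating_choose_mul_inv (n : ℕ) :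
    ∑ j ∈ range (n + 1), (-1) ^ j * (n.choose j : K) * (j : K)⁻¹ = -(harmonic n : K) := by
  induction n with
  | zero => simp
  | succ n ih =>
    rw [sum_range_succ_alternating_choose_mul]
    simp only [mul_sub, sum_sub_distrib, ih, Nat.cast_succ,
      sum_range_alternating_choose_mul_inv_add_one, harmonic_succ]
    push_cast
    ring

/-- The `j = 1` term vanishes because `(0 : K)⁻¹ = 0`. -/
theorem sum_range_alternating_choose_mul_inv_sub_one (n : ℕ) :
    ∑ j ∈ range (n + 1), (-1) ^ j * (n.choose j : K) * ((j : K) - 1)⁻¹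
      = n * harmonic n - n - 1 := by
  induction n with
  | zero => simp
  | succ n ih =>
    rw [sum_range_succ_alternating_choose_mul]
    simp only [mul_sub, sum_sub_distrib, ih, Nat.cast_succ, add_sub_cancel_right,
      sum_range_alternating_choose_mul_inv, harmonic_succ]
    push_cast
    field_simp
    ring

theorem sum_Icc_two_alternating_choose_mul_div_sq (n : ℕ) :
    ∑ j ∈ Icc 2 n, (-1) ^ j * (n.choose j : K) * ((j : K) / ((j : K) - 1)) / (j : K) ^ 2
      = ((n : K) + 1) * harmonic n - 2 * n := by
  rcases n with _ | n
  · simp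
  let F (j : ℕ) : K := (-1) ^ j * ((n + 1).choose j : K) * (((j : K) - 1)⁻¹ - (j : K)⁻¹)
  have partial_fractions : ∀ j ∈ Icc 2 (n + 1),
      (-1) ^ j * ((n + 1).choose j : K) * ((j : K) / ((j : K) - 1)) / (j : K) ^ 2 = F j := by
    intro j hj
    have hj : 2 ≤ j := (mem_Icc.1 hj).1
    have hj0 : (j : K) ≠ 0 := Nat.cast_ne_zero.2 (by omega)
    have hj1 : (j : K) - 1 ≠ 0 := sub_ne_zero.2 (Nat.cast_ne_one.2 (by omega))
    simp only [F]
    field_simp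
    ring
  have split : ∑ j ∈ range (n + 2), F j = F 0 + F 1 + ∑ j ∈ Icc 2 (n + 1), F j := by
    rw [range_eq_Ico, sum_eq_sum_Ico_succ_bot (by omega), sum_eq_sum_Ico_succ_bot (by omega),
      ← Ico_add_one_right_eq_Icc, ← add_assoc]
    rfl
  have full : ∑ j ∈ range (n + 2), F j
      = ((n : K) + 1) * harmonic (n + 1) - (n + 1) - 1 + harmonic (n + 1) := by
    simp only [F, mul_sub, sum_sub_distrib, sum_range_alternating_choose_mul_inv,
      sum_range_alternating_choose_mul_inv_sub_one]
    push_cast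
    ring
  -- with `0⁻¹ = 0`, the boundary terms are `F 0 = -1` and `F 1 = n + 1`
  simp only [pow_zero, Nat.choose_zero_right, Nat.cast_one, mul_one, CharP.cast_eq_zero, zero_sub,
    inv_neg, inv_one, inv_zero, sub_zero, mul_neg, pow_one, Nat.choose_one_right, Nat.cast_add,
    neg_mul, one_mul, neg_add_rev, sub_self, neg_neg, neg_add_cancel_comm_assoc, F] at split
  rw [sum_congr rfl partial_fractions]
  push_cast
  linear_combination full - split

end AlternatingBinomialSums

theorem integrableOn_pow_mul_exp_neg_mul_Ioi (k : ℕ) {a : ℝ} (ha : 0 < a) :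
    IntegrableOn (fun x : ℝ ↦ x ^ k * exp (-(a * x))) (Set.Ioi 0) := by
  refine (integrableOn_rpow_mul_exp_neg_mul_rpow (s := k) (p := 1)
    (neg_one_lt_zero.trans_le k.cast_nonneg) one_pos ha).congr_fun (fun x _ ↦ ?_)
    measurableSet_Ioi
  simp [Real.rpow_natCast]

theorem integral_pow_mul_exp_neg_mul_Ioi (k : ℕ) {a : ℝ} (ha : 0 < a) :
    ∫ x in Set.Ioi 0, x ^ k * exp (-(a * x)) = k.factorial / a ^ (k + 1) := by
  have := integral_rpow_mul_exp_neg_mul_Ioi (a := k + 1) (by positivity) ha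
  simp only [add_sub_cancel_right, Real.rpow_natCast] at this
  rw [this, Real.Gamma_nat_eq_factorial, ← Nat.cast_add_one, Real.rpow_natCast, div_pow, one_pow,
    one_div_mul_eq_div]

theorem integral_Ioi_mul_exp_mixture {ι : Type*} (s : Finset ι) (a c : ι → ℝ)
    (ha : ∀ i ∈ s, 0 < a i) (p q : ℝ) :
    ∫ x in Set.Ioi 0, x * (p * exp (-x) * (x - q) + ∑ i ∈ s, c i * exp (-(a i * x)))
      = 2 * p - p * q + ∑ i ∈ s, c i / a i ^ 2 := by
  have expand (x : ℝ) : x * (p * exp (-x) * (x - q) + ∑ i ∈ s, c i * exp (-(a i * x)))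
      = (p * (x ^ 2 * exp (-(1 * x))) - p * q * (x ^ 1 * exp (-(1 * x))))
        + ∑ i ∈ s, c i * (x ^ 1 * exp (-(a i * x))) := by
    rw [mul_add, mul_sum]
    simp only [one_mul, pow_one]
    congr 1
    · ring
    · exact sum_congr rfl fun _ _ ↦ by ring
  have integrable (k : ℕ) {b : ℝ} (hb : 0 < b) (r : ℝ) :=
    (integrableOn_pow_mul_exp_neg_mul_Ioi k hb).const_mul r
  have integrable_gamma_part : IntegrableOn
      (fun x ↦ p * (x ^ 2 * exp (-(1 * x))) - p * q * (x ^ 1 * exp (-(1 * x)))) (Set.Ioi 0) :=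
    (integrable 2 one_pos p).sub (integrable 1 one_pos _)
  have integrable_exp_part (i) (hi : i ∈ s) := integrable 1 (ha i hi) (c i)
  simp_rw [expand]
  rw [integral_add integrable_gamma_part (integrable_finsetSum _ integrable_exp_part),
    integral_sub (integrable 2 one_pos p) (integrable 1 one_pos _),
    integral_finsetSum _ integrable_exp_part]
  simp only [integral_const_mul, integral_pow_mul_exp_neg_mul_Ioi _ one_pos]
  rw [sum_congr rfl fun i hi ↦ by rw [integral_pow_mul_exp_neg_mul_Ioi 1 (ha i hi)]]
  norm_num [div_eq_mul_inv]
  ring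

theorem harm_eq_harmonic (n : ℕ) : harm n = harmonic n := by
  simp [harm, harmonic, one_div]

theorem eulerMascheroniConstant_add_log_lt_harmonic {n : ℕ} (hn : n ≠ 0) :
    eulerMascheroniConstant + log n < harmonic n := by
  have := eulerMascheroniConstant_lt_eulerMascheroniSeq' n
  rw [eulerMascheroniSeq', if_neg hn] at this
  linarith

theorem harmonic_lt_eulerMascheroniConstant_add_log_add_one (n : ℕ) :
    harmonic n < eulerMascheroniConstant + log (n + 1) := by
  have := eulerMascheroniSeq_lt_eulerMascheroniConstant n
  rw [eulerMascheroniSeq] at this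
  linarith

/-- The expected size of the file generating the most traffic among `n` files:
`∫_0^∞ x [n e^{-x}(x - H_{n-1}) + ∑_{j=2}^n (-1)^j C(n,j)(j/(j-1)) e^{-jx}] dx
  = 1 + 1/n + H_{n-1}`, and for `n ≥ 2` this value `E_max(n)` satisfies
`1 + 1/n + γ + log(n-1) < E_max(n) < 1 + 1/n + γ + log n`, where `γ` is the
Euler–Mascheroni constant. -/
theorem expected_size_of_most_important_file (n : ℕ) (hn : 1 ≤ n) :
    (∫ x in Set.Ioi (0:ℝ),
        x * ((n : ℝ) * Real.exp (-x) * (x - harm (n - 1))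
          + ∑ j ∈ Finset.Icc 2 n,
              (-1 : ℝ) ^ j * (n.choose j : ℝ) * ((j : ℝ) / ((j : ℝ) - 1))
                * Real.exp (-((j : ℝ) * x))))
      = 1 + 1 / (n : ℝ) + harm (n - 1)
    ∧ (2 ≤ n →
        1 + 1 / (n : ℝ) + Real.eulerMascheroniConstant + Real.log ((n : ℝ) - 1)
            < 1 + 1 / (n : ℝ) + harm (n - 1)
        ∧ 1 + 1 / (n : ℝ) + harm (n - 1)
            < 1 + 1 / (n : ℝ) + Real.eulerMascheroniConstant
                + Real.log (n : ℝ)) := by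
  obtain ⟨m, rfl⟩ := Nat.exists_eq_add_of_le' hn
  have index_pos : ∀ j ∈ Icc 2 (m + 1), (0 : ℝ) < j := fun j hj ↦ by
    have := (mem_Icc.1 hj).1
    positivity
  rw [Nat.add_sub_cancel, harm_eq_harmonic]
  refine ⟨?_, fun hm ↦ ⟨?_, ?_⟩⟩
  · rw [integral_Ioi_mul_exp_mixture _ _ _ index_pos, sum_Icc_two_alternating_choose_mul_div_sq,
      harmonic_succ]
    push_cast
    field_simp
    ring
  · have := eulerMascheroniConstant_add_log_lt_harmonic (n := m) (by omega)
    push_cast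
    rw [add_sub_cancel_right]
    linarith
  · have := harmonic_lt_eulerMascheroniConstant_add_log_add_one m
    push_cast
    linarith
end
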